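/- arXiv:2404.04507 — 2 statements merged into one kernel-verified Lean document; each statement's English description precedes it below -/
import Mathlib

section
/- Let 1 ≤ d < n be integers, Q ∈ ℝ^{d×(n−d)}, and α ≥ β ≥ 0. Then there exists a constant C > 0, depending only on n, d, Q, α, β, such that for every k ∈ ℤ^n, written k = (k_I, k_II) with k_I ∈ ℤ^d and k_II ∈ ℤ^{n−d}, one has ‖k‖^{2β} ≤ C (‖k_I + Q k_II‖^{2α} + ‖k_II‖^{2β}), where ‖·‖ is the Euclidean norm and the convention 0⁰ = 1 is used. -/
/-!
Put `a = ‖k_I + Q k_II‖`, `b = ‖k_II‖` and `c = ‖Q‖ + 2`, with `‖Q‖` the `ℓ²` operator norm.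
Since `k_I = (k_I + Q k_II) - Q k_II`, the triangle inequality gives `‖k‖ ≤ c · max a b`.
If `b ≥ a` this yields `‖k‖^{2β} ≤ c^{2α} b^{2β}` directly. If `a ≥ b`, integrality enters:
a nonzero integer vector has norm at least `1`, so `c a ≥ 1` and raising `c a` to the larger
exponent `2α` can only increase `(c a)^{2β}`. Hence `C = c^{2α}` works.
-/

noncomputable def euclNorm {m : ℕ} (x : Fin m → ℝ) : ℝ :=
  ‖(EuclideanSpace.equiv (Fin m) ℝ).symm x‖

open scoped Matrix Matrix.Norms.L2Operator

section euclNorm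

variable {n : ℕ}

lemma euclNorm_nonneg (x : Fin n → ℝ) : 0 ≤ euclNorm x := norm_nonneg _

lemma euclNorm_sq (x : Fin n → ℝ) : euclNorm x ^ 2 = ∑ i, x i ^ 2 := by
  simp [euclNorm, EuclideanSpace.norm_sq_eq]

lemma abs_le_euclNorm (x : Fin n → ℝ) (i : Fin n) : |x i| ≤ euclNorm x :=
  PiLp.norm_apply_le ((EuclideanSpace.equiv (Fin n) ℝ).symm x) i

lemma euclNorm_sub_le (u v : Fin n → ℝ) : euclNorm (u - v) ≤ euclNorm u + euclNorm v := by
  simpa only [euclNorm, map_sub] using norm_sub_le _ _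

lemma euclNorm_mulVec_le {d : ℕ} (Q : Matrix (Fin d) (Fin n) ℝ) (y : Fin n → ℝ) :
    euclNorm (Q *ᵥ y) ≤ ‖Q‖ * euclNorm y :=
  Q.l2_opNorm_mulVec ((EuclideanSpace.equiv (Fin n) ℝ).symm y)

lemma euclNorm_le_add_mulVec {d : ℕ} (Q : Matrix (Fin d) (Fin n) ℝ) (u : Fin d → ℝ)
    (y : Fin n → ℝ) : euclNorm u ≤ euclNorm (u + Q *ᵥ y) + ‖Q‖ * euclNorm y :=
  calc euclNorm u = euclNorm ((u + Q *ᵥ y) - Q *ᵥ y) := by rw [add_sub_cancel_right]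
    _ ≤ euclNorm (u + Q *ᵥ y) + euclNorm (Q *ᵥ y) := euclNorm_sub_le _ _
    _ ≤ euclNorm (u + Q *ᵥ y) + ‖Q‖ * euclNorm y := by gcongr; exact euclNorm_mulVec_le Q y

lemma euclNorm_le_castAdd_add_natAdd {d : ℕ} (x : Fin (d + n) → ℝ) :
    euclNorm x ≤
      euclNorm (fun i => x (Fin.castAdd n i)) + euclNorm (fun j => x (Fin.natAdd d j)) := by
  have hsq : euclNorm x ^ 2 =
      euclNorm (fun i => x (Fin.castAdd n i)) ^ 2 + euclNorm (fun j => x (Fin.natAdd d j)) ^ 2 := by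
    simp only [euclNorm_sq, Fin.sum_univ_add]
  nlinarith [euclNorm_nonneg x, euclNorm_nonneg (fun i => x (Fin.castAdd n i)),
    euclNorm_nonneg (fun j => x (Fin.natAdd d j))]

lemma euclNorm_intCast_eq_zero_or_one_le (k : Fin n → ℤ) :
    euclNorm (fun i => (k i : ℝ)) = 0 ∨ 1 ≤ euclNorm (fun i => (k i : ℝ)) := by
  by_cases hk : k = 0
  · left
    simp [hk, euclNorm, ← Pi.zero_def]
  · right
    obtain ⟨i, hi⟩ := Function.ne_iff.mp hk
    calc (1 : ℝ) ≤ |(k i : ℝ)| := by exact_mod_cast Int.one_le_abs hi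
      _ ≤ _ := abs_le_euclNorm (fun i => (k i : ℝ)) i

end euclNorm

lemma rpow_le_mul_add_rpow_of_le_mul_max {K a b c s t : ℝ} (hK : K = 0 ∨ 1 ≤ K) (ha : 0 ≤ a)
    (hb : 0 ≤ b) (hc : 1 ≤ c) (ht : 0 ≤ t) (hts : t ≤ s) (hKab : K ≤ c * max a b) :
    K ^ t ≤ c ^ s * (a ^ s + b ^ t) := by
  have has : 0 ≤ a ^ s := Real.rpow_nonneg ha s
  have hbt : 0 ≤ b ^ t := Real.rpow_nonneg hb t
  have hcs : 1 ≤ c ^ s := Real.one_le_rpow hc (ht.trans hts)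
  have hcts : c ^ t ≤ c ^ s := Real.rpow_le_rpow_of_exponent_le hc hts
  suffices K ^ t ≤ c ^ s * a ^ s ∨ K ^ t ≤ c ^ s * b ^ t by
    rcases this with h | h <;> nlinarith
  rcases hK with rfl | hK1
  · right
    calc (0 : ℝ) ^ t ≤ b ^ t := Real.rpow_le_rpow le_rfl hb ht
      _ ≤ c ^ s * b ^ t := le_mul_of_one_le_left hbt hcs
  rcases le_total b a with hba | hab
  · left
    rw [max_eq_left hba] at hKab
    calc K ^ t ≤ (c * a) ^ t := Real.rpow_le_rpow (by linarith) hKab ht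
      _ ≤ (c * a) ^ s := Real.rpow_le_rpow_of_exponent_le (hK1.trans hKab) hts
      _ = c ^ s * a ^ s := Real.mul_rpow (by linarith) ha
  · right
    rw [max_eq_right hab] at hKab
    calc K ^ t ≤ (c * b) ^ t := Real.rpow_le_rpow (by linarith) hKab ht
      _ = c ^ t * b ^ t := Real.mul_rpow (by linarith) hb
      _ ≤ c ^ s * b ^ t := by gcongr

theorem stmt1_general (d m : ℕ)
    (Q : Matrix (Fin d) (Fin m) ℝ) (α β : ℝ) (hβ : 0 ≤ β) (hαβ : β ≤ α) :
    ∃ C : ℝ, 0 < C ∧ ∀ k : Fin (d + m) → ℤ,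
      euclNorm (fun i => (k i : ℝ)) ^ (2 * β) ≤
        C * (euclNorm ((fun i => (k (Fin.castAdd m i) : ℝ)) +
              Q.mulVec fun j => (k (Fin.natAdd d j) : ℝ)) ^ (2 * α) +
            euclNorm (fun j => (k (Fin.natAdd d j) : ℝ)) ^ (2 * β)) := by
  set c := ‖Q‖ + 2
  have hc : 1 ≤ c := by linarith [norm_nonneg Q]
  refine ⟨c ^ (2 * α), Real.rpow_pos_of_pos (by linarith) _, fun k => ?_⟩
  set kI : Fin d → ℝ := fun i => (k (Fin.castAdd m i) : ℝ)
  set kII : Fin m → ℝ := fun j => (k (Fin.natAdd d j) : ℝ)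
  set a := euclNorm (kI + Q *ᵥ kII)
  set b := euclNorm kII
  have ha : 0 ≤ a := euclNorm_nonneg _
  have hb : 0 ≤ b := euclNorm_nonneg _
  have hk : euclNorm (fun i => (k i : ℝ)) ≤ c * max a b :=
    calc euclNorm (fun i => (k i : ℝ)) ≤ euclNorm kI + b := euclNorm_le_castAdd_add_natAdd _
      _ ≤ a + ‖Q‖ * b + b := by gcongr; exact euclNorm_le_add_mulVec Q kI kII
      _ ≤ c * max a b := by
        nlinarith [le_max_left a b, le_max_right a b, norm_nonneg Q,
          mul_le_mul_of_nonneg_left (le_max_right a b) (norm_nonneg Q)]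
  exact rpow_le_mul_add_rpow_of_le_mul_max (euclNorm_intCast_eq_zero_or_one_le k) ha hb hc
    (by linarith) (by linarith) hk

/-- With `n = d + m`, `Q ∈ ℝ^{d×m}` and `α ≥ β ≥ 0`, there is `C > 0`
(depending only on `n, d, Q, α, β`) such that for every `k ∈ ℤ^n`, split as `k = (k_I, k_II)`,
`‖k‖^(2β) ≤ C (‖k_I + Q k_II‖^(2α) + ‖k_II‖^(2β))` (real powers, with `0⁰ = 1`). -/
theorem stmt1 (d m : ℕ) (hd : 1 ≤ d) (hm : 1 ≤ m)
    (Q : Matrix (Fin d) (Fin m) ℝ) (α β : ℝ) (hβ : 0 ≤ β) (hαβ : β ≤ α) :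
    ∃ C : ℝ, 0 < C ∧ ∀ k : Fin (d + m) → ℤ,
      euclNorm (fun i => (k i : ℝ)) ^ (2 * β) ≤
        C * (euclNorm ((fun i => (k (Fin.castAdd m i) : ℝ)) +
              Q.mulVec fun j => (k (Fin.natAdd d j) : ℝ)) ^ (2 * α) +
            euclNorm (fun j => (k (Fin.natAdd d j) : ℝ)) ^ (2 * β)) :=
  stmt1_general d m Q α β hβ hαβ
end

section
/- Let 1 ≤ d < n be integers, Q ∈ ℝ^{d×(n−d)}, and K, L positive integers. Given k* ∈ 𝒦*_{K,L}, define k ∈ ℤ^n as follows: for j = d+1,…,n set k_j = k*_j if k*_j < L and k_j = k*_j − 2L if L ≤ k*_j < 2L; then with k_II = (k_{d+1},…,k_n), set R_j = 2K·⌈(−K − (Q k_II)_j)/(2K)⌉ for j = 1,…,d, and put k_j = k*_j + R_j if k*_j + R_j + (Q k_II)_j < K and k_j = k*_j + R_j − 2K otherwise. Then k ∈ 𝒦_{K,L} and ϱ(k) = k*, where ϱ is the componentwise reduction modulo 2K (first d components) and modulo 2L (last n−d components) with residues in [0,2K) resp. [0,2L). -/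
/-- Membership in the parallelogram index set `𝒦_{K,L}`:
each component of `k_I + Q k_II` lies in `[-K, K)` and each component of `k_II` in `[-L, L)`. -/
def memK (d m : ℕ) (Q : Matrix (Fin d) (Fin m) ℝ) (K L : ℕ) (k : Fin (d + m) → ℤ) : Prop :=
  (∀ i : Fin d,
      -(K : ℝ) ≤ (k (Fin.castAdd m i) : ℝ) + Q.mulVec (fun j => (k (Fin.natAdd d j) : ℝ)) i ∧
      (k (Fin.castAdd m i) : ℝ) + Q.mulVec (fun j => (k (Fin.natAdd d j) : ℝ)) i < (K : ℝ)) ∧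
  (∀ j : Fin m, -(L : ℤ) ≤ k (Fin.natAdd d j) ∧ k (Fin.natAdd d j) < (L : ℤ))

/-- Membership in the hyperrectangle index set `𝒦*_{K,L}`:
components of `k_I` in `[0, 2K)` and components of `k_II` in `[0, 2L)`. -/
def memKstar (d m K L : ℕ) (k : Fin (d + m) → ℤ) : Prop :=
  (∀ i : Fin d, 0 ≤ k (Fin.castAdd m i) ∧ k (Fin.castAdd m i) < 2 * (K : ℤ)) ∧
  (∀ j : Fin m, 0 ≤ k (Fin.natAdd d j) ∧ k (Fin.natAdd d j) < 2 * (L : ℤ))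

/-- The index-shift map `ϱ`: componentwise reduction modulo `2K` on the first `d`
components and modulo `2L` on the last `n - d` components, residues in `[0,2K)` resp. `[0,2L)`. -/
def varrho (d m K L : ℕ) (k : Fin (d + m) → ℤ) : Fin (d + m) → ℤ :=
  Fin.append (fun i => k (Fin.castAdd m i) % (2 * (K : ℤ)))
    fun j => k (Fin.natAdd d j) % (2 * (L : ℤ))

/-- the explicit inverse of the index-shift map. Given `k* ∈ 𝒦*_{K,L}`,
set `k_j = k*_j` if `k*_j < L` and `k_j = k*_j - 2L` otherwise (last `n-d` components),
`R_j = 2K ⌈(-K - (Q k_II)_j)/(2K)⌉`, and `k_j = k*_j + R_j` if `k*_j + R_j + (Q k_II)_j < K`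
and `k_j = k*_j + R_j - 2K` otherwise (first `d` components). Then `k ∈ 𝒦_{K,L}` and
`ϱ(k) = k*`. -/
theorem stmt11 (d m : ℕ) (hd : 1 ≤ d) (hm : 1 ≤ m)
    (Q : Matrix (Fin d) (Fin m) ℝ) (K L : ℕ) (hK : 0 < K) (hL : 0 < L)
    (kstar : Fin (d + m) → ℤ) (hkstar : memKstar d m K L kstar)
    (kII : Fin m → ℤ)
    (hkII : ∀ j : Fin m, kII j =
      if kstar (Fin.natAdd d j) < (L : ℤ) then kstar (Fin.natAdd d j)
      else kstar (Fin.natAdd d j) - 2 * (L : ℤ))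
    (R : Fin d → ℤ)
    (hR : ∀ i : Fin d, R i =
      2 * (K : ℤ) * ⌈(-(K : ℝ) - Q.mulVec (fun j => (kII j : ℝ)) i) / (2 * (K : ℝ))⌉)
    (kI : Fin d → ℤ)
    (hkI : ∀ i : Fin d, kI i =
      if ((kstar (Fin.castAdd m i) + R i : ℤ) : ℝ) + Q.mulVec (fun j => (kII j : ℝ)) i < (K : ℝ)
      then kstar (Fin.castAdd m i) + R i
      else kstar (Fin.castAdd m i) + R i - 2 * (K : ℤ)) :
    memK d m Q K L (Fin.append kI kII) ∧ varrho d m K L (Fin.append kI kII) = kstar := by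
  obtain ⟨hkA, hkB⟩ := hkstar
  have hK2 : (0:ℝ) < 2 * (K:ℝ) := by positivity
  -- bound on R i + c
  have hRc : ∀ i : Fin d, -(K:ℝ) ≤ (R i : ℝ) + Q.mulVec (fun j => (kII j : ℝ)) i ∧
      (R i : ℝ) + Q.mulVec (fun j => (kII j : ℝ)) i < (K:ℝ) := by
    intro i
    set c := Q.mulVec (fun j => (kII j : ℝ)) i with hc
    have h1 := Int.le_ceil ((-(K:ℝ) - c) / (2*(K:ℝ)))
    have h2 := Int.ceil_lt_add_one ((-(K:ℝ) - c) / (2*(K:ℝ)))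
    have hRi : (R i : ℝ) = 2*(K:ℝ) * (⌈(-(K:ℝ) - c) / (2*(K:ℝ))⌉ : ℝ) := by
      rw [hR i]; push_cast; ring
    constructor
    · rw [hRi]
      have : (-(K:ℝ) - c) = (-(K:ℝ) - c) / (2*(K:ℝ)) * (2*(K:ℝ)) := by field_simp
      nlinarith
    · rw [hRi]
      have : (-(K:ℝ) - c) = (-(K:ℝ) - c) / (2*(K:ℝ)) * (2*(K:ℝ)) := by field_simp
      nlinarith
  refine ⟨⟨?_, ?_⟩, ?_⟩
  · intro i
    simp only [Fin.append_left, Fin.append_right]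
    obtain ⟨hl, hr⟩ := hRc i
    obtain ⟨ha, hb⟩ := hkA i
    have ha' : (0:ℝ) ≤ (kstar (Fin.castAdd m i) : ℝ) := by exact_mod_cast ha
    have hb' : (kstar (Fin.castAdd m i) : ℝ) < 2*(K:ℝ) := by exact_mod_cast hb
    rw [hkI i]
    split_ifs with h
    · push_cast at h ⊢
      constructor <;> linarith
    · push_cast at h ⊢
      constructor <;> linarith
  · intro j
    simp only [Fin.append_right]
    have := hkB j
    rw [hkII j]
    split_ifs with h <;> omega
  · funext x
    refine Fin.addCases (fun i => ?_) (fun j => ?_) x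
    · show varrho d m K L (Fin.append kI kII) (Fin.castAdd m i) = _
      simp only [varrho, Fin.append_left]
      rw [hkI i, hR i]
      set t := ⌈(-(K : ℝ) - Q.mulVec (fun j => (kII j : ℝ)) i) / (2 * (K : ℝ))⌉
      have h2 := hkA i
      have := h2
      split_ifs with h
      · rw [mul_comm (2*(K:ℤ)) t, Int.add_mul_emod_self_right]
        exact Int.emod_eq_of_lt this.1 this.2
      · have : kstar (Fin.castAdd m i) + 2*(K:ℤ)*t - 2*(K:ℤ) =
            kstar (Fin.castAdd m i) + (t-1)*(2*(K:ℤ)) := by ring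
        rw [this, Int.add_mul_emod_self_right]
        exact Int.emod_eq_of_lt h2.1 h2.2
    · show varrho d m K L (Fin.append kI kII) (Fin.natAdd d j) = _
      simp only [varrho, Fin.append_right]
      obtain ⟨h1, h2⟩ := hkB j
      rw [hkII j]
      split_ifs with h
      · exact Int.emod_eq_of_lt h1 h2
      · have : kstar (Fin.natAdd d j) - 2 * (L:ℤ) =
            kstar (Fin.natAdd d j) + 2 * (L:ℤ) * (-1) := by ring
        rw [this, Int.add_mul_emod_self_left]
        exact Int.emod_eq_of_lt h1 h2
end
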